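/- The depth of a join in the symbolic lattice L is bounded by the maximum of the depths: for all l₁, l₂ ∈ L, D(l₁ ⊔ l₂) ≤ max(D(l₁), D(l₂)). -/

import Mathlib

inductive SymExpr (P U B F : Type*) where
  | bot : SymExpr P U B F
  | top : SymExpr P U B F
  | prim : P → SymExpr P U B F
  | unop : U → SymExpr P U B F → SymExpr P U B F
  | binop : B → SymExpr P U B F → SymExpr P U B F → SymExpr P U B F
  | fn : F → List (SymExpr P U B F) → SymExpr P U B F
  | phi : List (SymExpr P U B F) → SymExpr P U B F

namespace SymExpr

variable {P U B F : Type*}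

/-- The partial order `⊑` on the symbolic lattice. -/
inductive Le : SymExpr P U B F → SymExpr P U B F → Prop where
  | bot (l) : Le .bot l
  | top (l) : Le l .top
  | prim (p : P) : Le (.prim p) (.prim p)
  | unop {l l'} (u : U) : Le l l' → Le (.unop u l) (.unop u l')
  | binop {l₁ l₂ l₁' l₂'} (b : B) : Le l₁ l₁' → Le l₂ l₂' →
      Le (.binop b l₁ l₂) (.binop b l₁' l₂')
  | fn {ls ls'} (f : F) : List.Forall₂ Le ls ls' → Le (.fn f ls) (.fn f ls')
  | phi {ls ls'} : List.Forall₂ Le ls ls' → Le (.phi ls) (.phi ls')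

attribute [local instance] Classical.propDecidable

mutual
noncomputable def join : SymExpr P U B F → SymExpr P U B F → SymExpr P U B F
  | .bot, l => l
  | l, .bot => l
  | .prim p, .prim p' => if p = p' then .prim p else .top
  | .unop u l, .unop u' l' => if u = u' then .unop u (join l l') else .top
  | .binop b l₁ l₂, .binop b' l₁' l₂' =>
      if b = b' then .binop b (join l₁ l₁') (join l₂ l₂') else .top
  | .fn f ls, .fn f' ls' =>
      if f = f' ∧ ls.length = ls'.length then .fn f (joinList ls ls') else .top
  | .phi ls, .phi ls' =>
      if ls.length = ls'.length then .phi (joinList ls ls') else .top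
  | _, _ => .top

noncomputable def joinList : List (SymExpr P U B F) → List (SymExpr P U B F) → List (SymExpr P U B F)
  | l :: ls, l' :: ls' => join l l' :: joinList ls ls'
  | _, _ => []
end

mutual
noncomputable def meet : SymExpr P U B F → SymExpr P U B F → SymExpr P U B F
  | .top, l => l
  | l, .top => l
  | .prim p, .prim p' => if p = p' then .prim p else .bot
  | .unop u l, .unop u' l' => if u = u' then .unop u (meet l l') else .bot
  | .binop b l₁ l₂, .binop b' l₁' l₂' =>
      if b = b' then .binop b (meet l₁ l₁') (meet l₂ l₂') else .bot
  | .fn f ls, .fn f' ls' =>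
      if f = f' ∧ ls.length = ls'.length then .fn f (meetList ls ls') else .bot
  | .phi ls, .phi ls' =>
      if ls.length = ls'.length then .phi (meetList ls ls') else .bot
  | _, _ => .bot

noncomputable def meetList : List (SymExpr P U B F) → List (SymExpr P U B F) → List (SymExpr P U B F)
  | l :: ls, l' :: ls' => meet l l' :: meetList ls ls'
  | _, _ => []
end

mutual
def depth : SymExpr P U B F → ℕ
  | .bot => 0
  | .top => 0
  | .prim _ => 0
  | .unop _ l => 1 + depth l
  | .binop _ l₁ l₂ => 1 + max (depth l₁) (depth l₂)
  | .fn _ ls => 1 + depthList ls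
  | .phi ls => 1 + depthList ls

def depthList : List (SymExpr P U B F) → ℕ
  | [] => 0
  | l :: ls => max (depth l) (depthList ls)
end

/-- The widening truncation `T_i`. -/
def trunc : ℕ → SymExpr P U B F → SymExpr P U B F
  | _, .bot => .bot
  | _, .top => .top
  | _, .prim p => .prim p
  | 0, .unop _ _ => .top
  | 0, .binop _ _ _ => .top
  | 0, .fn _ _ => .top
  | 0, .phi _ => .top
  | i + 1, .unop u l => .unop u (trunc i l)
  | i + 1, .binop b l₁ l₂ => .binop b (trunc i l₁) (trunc i l₂)
  | i + 1, .fn f ls => .fn f (ls.map (fun l => trunc i l))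
  | i + 1, .phi ls => .phi (ls.map (fun l => trunc i l))

end SymExpr

/-! The join either returns one of its arguments, or returns `⊤` (of depth `0`), or keeps the
common head constructor and joins the children pairwise; in the last case induction on the
children bounds the depth. -/

namespace SymExpr

variable {P U B F : Type*}

theorem induction_mem {motive : SymExpr P U B F → Prop} (bot : motive .bot) (top : motive .top)
    (prim : ∀ p, motive (.prim p)) (unop : ∀ u l, motive l → motive (.unop u l))
    (binop : ∀ b l₁ l₂, motive l₁ → motive l₂ → motive (.binop b l₁ l₂))
    (fn : ∀ f ls, (∀ l ∈ ls, motive l) → motive (.fn f ls))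
    (phi : ∀ ls, (∀ l ∈ ls, motive l) → motive (.phi ls)) : ∀ l, motive l
  | .bot => bot
  | .top => top
  | .prim p => prim p
  | .unop u l => unop u l (induction_mem bot top prim unop binop fn phi l)
  | .binop b l₁ l₂ => binop b l₁ l₂ (induction_mem bot top prim unop binop fn phi l₁)
      (induction_mem bot top prim unop binop fn phi l₂)
  | .fn f ls => fn f ls fun l _ => induction_mem bot top prim unop binop fn phi l
  | .phi ls => phi ls fun l _ => induction_mem bot top prim unop binop fn phi l

theorem depthList_joinList_le {ls ls' : List (SymExpr P U B F)}
    (h : ∀ l ∈ ls, ∀ l', (join l l').depth ≤ max l.depth l'.depth) :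
    depthList (joinList ls ls') ≤ max (depthList ls) (depthList ls') := by
  induction ls generalizing ls' with
  | nil => simp [joinList, depthList]
  | cons l ls ih =>
    cases ls' with
    | nil => simp [joinList, depthList]
    | cons l' ls' =>
      have hhead := h l List.mem_cons_self l'
      have htail := ih (ls' := ls') fun l hl => h l (List.mem_cons_of_mem _ hl)
      simp only [joinList, depthList]
      omega

end SymExpr

/-- the depth of a join is bounded by the maximum of the depths. -/
theorem SymExpr.depth_join_le {P U B F : Type*} (l₁ l₂ : SymExpr P U B F) :
    (l₁.join l₂).depth ≤ max l₁.depth l₂.depth := by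
  induction l₁ using SymExpr.induction_mem generalizing l₂ with
  | bot => simp [join]
  | top => cases l₂ <;> simp [join, depth]
  | prim p =>
    cases l₂ with
    | prim p' => simp only [join]; split_ifs <;> rfl
    | _ => simp [join, depth]
  | unop u l ih =>
    cases l₂ with
    | unop u' l' => simp only [join]; split_ifs <;> simp [depth, ih]
    | _ => simp [join, depth]
  | binop b l r ihl ihr =>
    cases l₂ with
    | binop b' l' r' =>
      have := ihl l'
      have := ihr r'
      simp only [join]; split_ifs <;> simp only [depth] <;> omega
    | _ => simp [join, depth]
  | fn f ls ih =>
    cases l₂ with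
    | fn f' ls' =>
      have := depthList_joinList_le (ls' := ls') ih
      simp only [join]; split_ifs <;> simp only [depth] <;> omega
    | _ => simp [join, depth]
  | phi ls ih =>
    cases l₂ with
    | phi ls' =>
      have := depthList_joinList_le (ls' := ls') ih
      simp only [join]; split_ifs <;> simp only [depth] <;> omega
    | _ => simp [join, depth]
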